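/- Let n ≥ 1 be an integer and let s be an integer with 1 ≤ s < 2^(n-1). Then there exists an integer i with −n ≤ i ≤ n such that, setting r = 2^i, the overlap (s + r·(2^n − 2s)/√2) / √(2·(s² + r²·(2^n − 2s)²/2)) is at least (1 + √2)/√6. -/

import Mathlib

/-!
Put `t = 2^n - 2s`, so `1 ≤ t < 2^n`. With `c = √2·b`, the squared overlap inequality for
`(a, b)` reduces to `2√2 (c - a)(2a - c) ≥ 0`, so it holds whenever `a ≤ c ≤ 2a`. For
`b = 2^i·t/√2` the window `s ≤ 2^i·t ≤ 2s` has ratio `2` and is hit by `i = ⌈log₂ (s/t)⌉`;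
since `2^(-n) < s/t ≤ 2^n`, this `i` lies in `[-n, n]`.
-/

open Real

/-- Overlap of the vector `(a, b)` with `|+⟩ = (1/√2, 1/√2)`. -/
noncomputable def plusOverlap (a b : ℝ) : ℝ := (a + b) / √(2 * (a ^ 2 + b ^ 2))

theorem le_plusOverlap {a b : ℝ} (ha : 0 < a) (h₁ : a ≤ √2 * b) (h₂ : √2 * b ≤ 2 * a) :
    (1 + √2) / √6 ≤ plusOverlap a b := by
  have h2 : √2 ^ 2 = 2 := sq_sqrt (by norm_num)
  have h6 : √6 ^ 2 = 6 := sq_sqrt (by norm_num)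
  have hb : 0 < b := pos_of_mul_pos_right (ha.trans_le h₁) (sqrt_nonneg 2)
  have hD : 0 < 2 * (a ^ 2 + b ^ 2) := by positivity
  rw [plusOverlap, div_le_div_iff₀ (by positivity) (sqrt_pos.mpr hD)]
  apply le_of_pow_le_pow_left₀ two_ne_zero (by positivity)
  rw [mul_pow, mul_pow, h6, sq_sqrt hD.le]
  have key : (a + b) ^ 2 * 6 - (1 + √2) ^ 2 * (2 * (a ^ 2 + b ^ 2)) =
      2 * √2 * ((√2 * b - a) * (2 * a - √2 * b)) := by
    linear_combination (-2 * a ^ 2 - 2 * b ^ 2 - 6 * a * b + 2 * √2 * b ^ 2) * h2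
  nlinarith [mul_nonneg (sub_nonneg.2 h₁) (sub_nonneg.2 h₂), sqrt_nonneg 2]

theorem Int.exists_zpow_mem_Ico_mul {R : Type*} [Field R] [LinearOrder R] [IsStrictOrderedRing R]
    [FloorSemiring R] {b : ℕ} (hb : 1 < b) {r : R} {m k : ℤ} (hm : (b : R) ^ m < r)
    (hk : r ≤ (b : R) ^ k) : ∃ i : ℤ, m < i ∧ i ≤ k ∧ r ≤ (b : R) ^ i ∧ (b : R) ^ i < b * r := by
  have hr : 0 < r := (zpow_pos (by exact_mod_cast zero_lt_one.trans hb) m).trans hm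
  refine ⟨clog b r, (zpow_lt_iff_lt_clog hb hr).1 hm, (le_zpow_iff_clog_le hb hr).1 hk,
    self_le_zpow_clog hb r, ?_⟩
  calc (b : R) ^ clog b r = b * (b : R) ^ (clog b r - 1) := by
        rw [← zpow_one_add₀ (by exact_mod_cast (zero_lt_one.trans hb).ne'), add_sub_cancel]
    _ < b * r := by
        gcongr
        exact zpow_pred_clog_lt_self hb hr

theorem exists_zpow_two_mul_mem_Icc {s t : ℝ} {n : ℕ} (hs : 1 ≤ s) (hsn : s ≤ 2 ^ n)
    (ht : 1 ≤ t) (htn : t < 2 ^ n) :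
    ∃ i : ℤ, -(n : ℤ) < i ∧ i ≤ n ∧ s ≤ 2 ^ i * t ∧ 2 ^ i * t ≤ 2 * s := by
  have ht₀ : 0 < t := one_pos.trans_le ht
  have hlo : (2 : ℝ) ^ (-(n : ℤ)) < s / t := by
    rw [zpow_neg, zpow_natCast, inv_eq_one_div]
    exact (one_div_lt_one_div_of_lt ht₀ htn).trans_le (div_le_div_of_nonneg_right hs ht₀.le)
  have hhi : s / t ≤ (2 : ℝ) ^ (n : ℤ) := by
    rw [zpow_natCast]
    exact (div_le_self (by linarith) ht).trans hsn
  obtain ⟨i, hin, hin', hle, hlt⟩ :=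
    Int.exists_zpow_mem_Ico_mul (R := ℝ) (b := 2) (m := -n) (k := n) one_lt_two
      (by exact_mod_cast hlo) (by exact_mod_cast hhi)
  push_cast at hle hlt
  refine ⟨i, hin, hin', (div_le_iff₀ ht₀).1 hle, ?_⟩
  rw [mul_div_assoc', lt_div_iff₀ ht₀] at hlt
  exact hlt.le

theorem stmt_0_general (n : ℕ) (s : ℤ) (hs1 : 1 ≤ s) (hs2 : s < 2 ^ (n - 1)) :
    ∃ i : ℤ, -(n : ℤ) ≤ i ∧ i ≤ (n : ℤ) ∧
      ((s : ℝ) + (2 : ℝ) ^ i * ((2 ^ n - 2 * (s : ℝ)) / Real.sqrt 2)) /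
          Real.sqrt (2 * ((s : ℝ) ^ 2 + ((2 : ℝ) ^ i) ^ 2 * (2 ^ n - 2 * (s : ℝ)) ^ 2 / 2)) ≥
        (1 + Real.sqrt 2) / Real.sqrt 6 := by
  have h2s : 2 * s + 1 ≤ 2 ^ n := by
    cases n with
    | zero => simp at hs2; omega
    | succ m => rw [Nat.add_sub_cancel] at hs2; rw [pow_succ]; omega
  have hs : (1 : ℝ) ≤ s := by exact_mod_cast hs1
  have h2sR : 2 * (s : ℝ) + 1 ≤ 2 ^ n := by exact_mod_cast h2s
  obtain ⟨i, hin, hin', hle, hge⟩ := exists_zpow_two_mul_mem_Icc (s := s) (t := 2 ^ n - 2 * s)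
    hs (by linarith) (by linarith) (by linarith)
  have hoverlap : ((s : ℝ) + (2 : ℝ) ^ i * ((2 ^ n - 2 * (s : ℝ)) / √2)) /
      √(2 * ((s : ℝ) ^ 2 + ((2 : ℝ) ^ i) ^ 2 * (2 ^ n - 2 * (s : ℝ)) ^ 2 / 2)) =
      plusOverlap s (2 ^ i * ((2 ^ n - 2 * s) / √2)) := by
    rw [plusOverlap, mul_pow, div_pow, sq_sqrt zero_le_two, mul_div_assoc (((2 : ℝ) ^ i) ^ 2)]
  have hscale : √2 * (2 ^ i * ((2 ^ n - 2 * (s : ℝ)) / √2)) = 2 ^ i * (2 ^ n - 2 * s) := by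
    field_simp
  refine ⟨i, hin.le, hin', ?_⟩
  rw [ge_iff_le, hoverlap]
  exact le_plusOverlap (by linarith) (hscale ▸ hle) (hscale ▸ hge)

/-- For `1 ≤ s < 2^(n-1)`, some dyadic ratio `r = 2^i` with `-n ≤ i ≤ n` brings the
vector `(s, r·(2^n − 2s)/√2)` within overlap `(1+√2)/√6` of `|+⟩`. -/
theorem stmt_0 (n : ℕ) (hn : 1 ≤ n) (s : ℤ) (hs1 : 1 ≤ s) (hs2 : s < 2 ^ (n - 1)) :
    ∃ i : ℤ, -(n : ℤ) ≤ i ∧ i ≤ (n : ℤ) ∧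
      ((s : ℝ) + (2 : ℝ) ^ i * ((2 ^ n - 2 * (s : ℝ)) / Real.sqrt 2)) /
          Real.sqrt (2 * ((s : ℝ) ^ 2 + ((2 : ℝ) ^ i) ^ 2 * (2 ^ n - 2 * (s : ℝ)) ^ 2 / 2)) ≥
        (1 + Real.sqrt 2) / Real.sqrt 6 :=
  stmt_0_general n s hs1 hs2
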